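/- arXiv:1706.09260 — 3 statements merged into one kernel-verified Lean document; each statement's English description precedes it below -/
import Mathlib

section
/- Let ϑ ≥ 2π. There exists a constant κ₀ ≥ 1 such that for all real a, b with |a| ≤ ϑ and ϑ^{-1} ≤ b ≤ ϑ, all complex λ with Re λ ≥ 1, and all h in the periodic Sobolev space H^2(𝕊) (complex valued): κ₀ ‖(λ - 𝔸_{a,b})h‖_{H^1(𝕊)} ≥ |λ|·‖h‖_{H^1(𝕊)} + ‖h‖_{H^2(𝕊)}, where 𝔸_{a,b} := a ∂_x - b (-∂_x²)^{1/2} is the Fourier multiplier with symbol i·a·m - b·|m|, m ∈ ℤ. -/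
open Real

/-- The squared Sobolev norm of order `r` of a sequence of Fourier coefficients. -/
noncomputable def HSobNormSq (r : ℝ) (c : ℤ → ℂ) : ℝ :=
  ∑' m : ℤ, (1 + (m : ℝ) ^ 2) ^ r * ‖c m‖ ^ 2

/-- Membership in the periodic Sobolev space `H^r(𝕊)`, in terms of Fourier coefficients. -/
def MemHSob (r : ℝ) (c : ℤ → ℂ) : Prop :=
  Summable fun m : ℤ => (1 + (m : ℝ) ^ 2) ^ r * ‖c m‖ ^ 2

/-!
On the Fourier side `λ - 𝔸_{a,b}` multiplies the `m`-th coefficient by `λ - i a m + b |m|`.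
Since `Re λ ≥ 1` and `b ≥ ϑ⁻¹`, the real part of this symbol dominates both `1` and `|m| / ϑ`,
and its imaginary part controls `Im λ` up to `|a m| ≤ ϑ |m|`; hence
`|λ|² + (1 + m²) ≤ 2 (1 + ϑ²)² |λ - i a m + b |m||²` for every `m`, uniformly in the parameters.
Multiplying by `(1 + m²) |ĥ(m)|²` and summing gives
`|λ|² ‖h‖²_{H¹} + ‖h‖²_{H²} ≤ 2 (1 + ϑ²)² ‖(λ - 𝔸_{a,b}) h‖²_{H¹}`, and `(x + y)² ≤ 2 (x² + y²)`
yields the estimate with `κ₀ = 2 (1 + ϑ²)`.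
-/

lemma one_le_one_add_sq (m : ℤ) : (1 : ℝ) ≤ 1 + (m : ℝ) ^ 2 :=
  le_add_of_nonneg_right (sq_nonneg _)

lemma HSobNormSq_nonneg (r : ℝ) (c : ℤ → ℂ) : 0 ≤ HSobNormSq r c :=
  tsum_nonneg fun m => by
    have := one_le_one_add_sq m
    positivity

lemma MemHSob.mono {r s : ℝ} {c : ℤ → ℂ} (hc : MemHSob s c) (hrs : r ≤ s) : MemHSob r c :=
  Summable.of_nonneg_of_le (fun m => by have := one_le_one_add_sq m; positivity)
    (fun m => mul_le_mul_of_nonneg_right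
      (rpow_le_rpow_of_exponent_le (one_le_one_add_sq m) hrs) (sq_nonneg _)) hc

lemma MemHSob.mul_of_norm_sq_le {r s C : ℝ} {p c : ℤ → ℂ}
    (hp : ∀ m : ℤ, ‖p m‖ ^ 2 ≤ C * (1 + (m : ℝ) ^ 2) ^ s) (hc : MemHSob (r + s) c) :
    MemHSob r fun m => p m * c m := by
  refine Summable.of_nonneg_of_le (fun m => by have := one_le_one_add_sq m; positivity)
    (fun m => ?_) (hc.mul_left C)
  have hpos : (0 : ℝ) < 1 + (m : ℝ) ^ 2 := zero_lt_one.trans_le (one_le_one_add_sq m)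
  calc (1 + (m : ℝ) ^ 2) ^ r * ‖p m * c m‖ ^ 2
      = (1 + (m : ℝ) ^ 2) ^ r * (‖p m‖ ^ 2 * ‖c m‖ ^ 2) := by rw [norm_mul, mul_pow]
    _ ≤ (1 + (m : ℝ) ^ 2) ^ r * (C * (1 + (m : ℝ) ^ 2) ^ s * ‖c m‖ ^ 2) := by gcongr; exact hp m
    _ = C * ((1 + (m : ℝ) ^ 2) ^ (r + s) * ‖c m‖ ^ 2) := by rw [rpow_add hpos]; ring

lemma HSobNormSq_add_le_of_norm_sq_le {r A K : ℝ} {q c : ℤ → ℂ}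
    (hq : ∀ m : ℤ, A + (1 + (m : ℝ) ^ 2) ≤ K * ‖q m‖ ^ 2)
    (hc : MemHSob (r + 1) c) (hqc : MemHSob r fun m => q m * c m) :
    A * HSobNormSq r c + HSobNormSq (r + 1) c ≤ K * HSobNormSq r fun m => q m * c m := by
  have hc' : MemHSob r c := hc.mono (le_add_of_nonneg_right zero_le_one)
  unfold HSobNormSq
  rw [← tsum_mul_left, ← tsum_mul_left, ← (hc'.mul_left A).tsum_add hc]
  refine (hc'.mul_left A).add hc |>.tsum_le_tsum (fun m => ?_) (hqc.mul_left K)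
  have hpos : (0 : ℝ) < 1 + (m : ℝ) ^ 2 := zero_lt_one.trans_le (one_le_one_add_sq m)
  calc A * ((1 + (m : ℝ) ^ 2) ^ r * ‖c m‖ ^ 2) + (1 + (m : ℝ) ^ 2) ^ (r + 1) * ‖c m‖ ^ 2
      = (A + (1 + (m : ℝ) ^ 2)) * ((1 + (m : ℝ) ^ 2) ^ r * ‖c m‖ ^ 2) := by
        rw [rpow_add_one hpos.ne']; ring
    _ ≤ K * ‖q m‖ ^ 2 * ((1 + (m : ℝ) ^ 2) ^ r * ‖c m‖ ^ 2) := by gcongr; exact hq m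
    _ = K * ((1 + (m : ℝ) ^ 2) ^ r * ‖q m * c m‖ ^ 2) := by rw [norm_mul, mul_pow]; ring

/-- The Fourier symbol of `𝔸_{a,b} = a ∂ₓ - b (-∂ₓ²)^{1/2}`. -/
noncomputable def symbolA (a b : ℝ) (m : ℤ) : ℂ :=
  Complex.I * a * m - b * |(m : ℝ)|

lemma norm_sub_symbolA_sq (l : ℂ) (a b : ℝ) (m : ℤ) :
    ‖l - symbolA a b m‖ ^ 2 = (l.re + b * |(m : ℝ)|) ^ 2 + (l.im - a * m) ^ 2 := by
  rw [Complex.sq_norm, Complex.normSq_apply]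
  simp only [symbolA, Complex.sub_re, Complex.sub_im, Complex.mul_re, Complex.mul_im,
    Complex.I_re, Complex.I_im, Complex.ofReal_re, Complex.ofReal_im, Complex.intCast_re,
    Complex.intCast_im]
  ring

lemma norm_sub_symbolA_sq_le (l : ℂ) (a b : ℝ) (m : ℤ) :
    ‖l - symbolA a b m‖ ^ 2 ≤ (‖l‖ + |a| + |b|) ^ 2 * (1 + (m : ℝ) ^ 2) := by
  have hsymb : ‖symbolA a b m‖ ≤ (|a| + |b|) * |(m : ℝ)| := by
    unfold symbolA
    refine (norm_sub_le _ _).trans (le_of_eq ?_)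
    simp only [norm_mul, Complex.norm_I, Complex.norm_real, Complex.norm_intCast, norm_eq_abs,
      abs_abs]
    ring
  have hle : ‖l - symbolA a b m‖ ≤ ‖l‖ + (|a| + |b|) * |(m : ℝ)| :=
    (norm_sub_le _ _).trans (add_le_add_right hsymb _)
  have hab : 0 ≤ |a| + |b| := by positivity
  -- Cauchy–Schwarz: `(p + s t)² ≤ (p² + s²)(1 + t²) ≤ (p + s)²(1 + t²)`
  calc ‖l - symbolA a b m‖ ^ 2 ≤ (‖l‖ + (|a| + |b|) * |(m : ℝ)|) ^ 2 := by gcongr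
    _ ≤ (‖l‖ + |a| + |b|) ^ 2 * (1 + (m : ℝ) ^ 2) := by
      nlinarith [sq_abs (m : ℝ), sq_nonneg (‖l‖ * |(m : ℝ)| - (|a| + |b|)), norm_nonneg l,
        mul_nonneg (norm_nonneg l) hab]

lemma norm_sq_add_le_norm_sub_symbolA_sq {ϑ a b : ℝ} (hϑ : 0 < ϑ) (ha : |a| ≤ ϑ)
    (hb : ϑ⁻¹ ≤ b) {l : ℂ} (hl : 1 ≤ l.re) (m : ℤ) :
    ‖l‖ ^ 2 + (1 + (m : ℝ) ^ 2) ≤ 2 * (1 + ϑ ^ 2) ^ 2 * ‖l - symbolA a b m‖ ^ 2 := by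
  rw [norm_sub_symbolA_sq, Complex.sq_norm, Complex.normSq_apply]
  set R := l.re + b * |(m : ℝ)|
  set J := l.im - a * m
  have hbm : 0 ≤ b * |(m : ℝ)| :=
    mul_nonneg ((inv_pos.mpr hϑ).le.trans hb) (abs_nonneg _)
  have hR : 1 ≤ R := by linarith
  have hre : l.re ^ 2 ≤ R ^ 2 := by nlinarith
  have hm : |(m : ℝ)| ≤ ϑ * R := by
    have hϑb : 1 ≤ ϑ * b := by rwa [inv_le_iff_one_le_mul₀' hϑ] at hb
    nlinarith [abs_nonneg (m : ℝ)]
  have ham : |a * m| ≤ ϑ ^ 2 * R := by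
    rw [abs_mul, sq, mul_assoc]
    exact mul_le_mul ha hm (abs_nonneg _) hϑ.le
  have him : |l.im| ≤ |J| + ϑ ^ 2 * R := by
    calc |l.im| = |J + a * m| := by simp only [J, sub_add_cancel]
      _ ≤ |J| + |a * m| := abs_add_le _ _
      _ ≤ |J| + ϑ ^ 2 * R := by gcongr
  have him2 : l.im ^ 2 ≤ 2 * J ^ 2 + 2 * ϑ ^ 4 * R ^ 2 := by
    have := pow_le_pow_left₀ (abs_nonneg _) him 2
    rw [sq_abs] at this
    nlinarith [sq_abs J, sq_nonneg (|J| - ϑ ^ 2 * R)]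
  have hm2 : (m : ℝ) ^ 2 ≤ ϑ ^ 2 * R ^ 2 := by
    rw [← sq_abs (m : ℝ), ← mul_pow]
    exact pow_le_pow_left₀ (abs_nonneg _) hm 2
  nlinarith [sq_nonneg J, sq_nonneg R, sq_nonneg ϑ, pow_nonneg (sq_nonneg ϑ) 2]

/-- Uniform resolvent estimate for the Fourier multipliers `𝔸_{a,b} = a∂_x - b(-∂_x²)^{1/2}`
with symbol `i·a·m - b·|m|`: for `ϑ ≥ 2π` there is `κ₀ ≥ 1` such that for all `|a| ≤ ϑ`,
`ϑ⁻¹ ≤ b ≤ ϑ`, `Re λ ≥ 1` and `h ∈ H²(𝕊)`,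
`κ₀‖(λ - 𝔸_{a,b})h‖_{H¹} ≥ |λ|‖h‖_{H¹} + ‖h‖_{H²}`. -/
theorem uniform_resolvent_estimate (ϑ : ℝ) (hϑ : 2 * π ≤ ϑ) :
    ∃ κ₀ : ℝ, 1 ≤ κ₀ ∧
      ∀ a b : ℝ, |a| ≤ ϑ → ϑ⁻¹ ≤ b → b ≤ ϑ →
      ∀ l : ℂ, 1 ≤ l.re → ∀ c : ℤ → ℂ, MemHSob 2 c →
        κ₀ * Real.sqrt (HSobNormSq 1 (fun m =>
            (l - (Complex.I * a * m - b * |(m : ℝ)|)) * c m)) ≥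
          ‖l‖ * Real.sqrt (HSobNormSq 1 c) + Real.sqrt (HSobNormSq 2 c) := by
  have hϑ0 : 0 < ϑ := by linarith [pi_pos]
  refine ⟨2 * (1 + ϑ ^ 2), by nlinarith, fun a b ha hb _ l hl c hc => ?_⟩
  rw [← one_add_one_eq_two] at hc
  have hqc : MemHSob 1 fun m => (l - symbolA a b m) * c m :=
    hc.mul_of_norm_sq_le fun m => by simpa using norm_sub_symbolA_sq_le l a b m
  have hkey := HSobNormSq_add_le_of_norm_sq_le
    (norm_sq_add_le_norm_sub_symbolA_sq hϑ0 ha hb hl) hc hqc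
  rw [one_add_one_eq_two] at hkey
  rw [ge_iff_le]
  calc ‖l‖ * √(HSobNormSq 1 c) + √(HSobNormSq 2 c)
      ≤ √(2 * ((‖l‖ * √(HSobNormSq 1 c)) ^ 2 + √(HSobNormSq 2 c) ^ 2)) :=
        le_sqrt_of_sq_le add_sq_le
    _ = √(2 * (‖l‖ ^ 2 * HSobNormSq 1 c + HSobNormSq 2 c)) := by
        rw [mul_pow, sq_sqrt (HSobNormSq_nonneg _ _), sq_sqrt (HSobNormSq_nonneg _ _)]
    _ ≤ √((2 * (1 + ϑ ^ 2)) ^ 2 * HSobNormSq 1 fun m => (l - symbolA a b m) * c m) := by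
        apply sqrt_le_sqrt
        linear_combination 2 * hkey
    _ = 2 * (1 + ϑ ^ 2) * √(HSobNormSq 1 fun m => (l - symbolA a b m) * c m) := by
        rw [sqrt_mul (sq_nonneg _), sqrt_sq (by positivity)]
end

section
/- Let f ∈ H^s(𝕊) with s ∈ (3/2, 2) and set α := s/2 - 3/4 ∈ (0, 1/4). Define φ₆(f)(x) := PV ∫_{-π}^{π} (1/s) · 1/(1 + ((f(x) - f(x-s))/s)²) ds. Then φ₆(f) is well-defined (the principal value at s = 0 exists for every x), is 2π-periodic, and belongs to the Hölder space C^α(𝕊); moreover sup_{τ ∈ [0,1]} ‖φ₆(τ f)‖_{C^α} < ∞. -/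
/-!
Since `s > 3/2`, the weighted sums `∑ |f̂ m| |m|^(1+β)` converge for every `β < s - 3/2`, so
`f` is `C¹` with a `β`-Hölder derivative. Pairing `t` with `-t`, the integrand of `φ₆` becomes
`t⁻¹ (ρ A - ρ B)` with `ρ a = (1 + a²)⁻¹`, which is `1`-Lipschitz, and `A`, `B` the backward and
forward difference quotients of `f` at `x`. Their difference is `O(t^β)`, so the symmetrised
integrand is `O(t^(β-1))` and the principal value is an absolutely convergent integral. The same
identity bounds the increment in `x` by `O(|x - y|^β / t)`; using the first bound for
`t ≤ |x - y|` and the second one otherwise gives `O(|x - y|^α t^(β-α-1))`, integrable for `α < β`.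
Replacing `f` by `τ f` with `τ ∈ [0, 1]` only scales the Hölder constant of `f'` by `τ`.
-/

open MeasureTheory Filter Real

/-- The `m`-th Fourier coefficient of a `2π`-periodic function `f : ℝ → ℝ`. -/
noncomputable def periodicFourierCoeff (f : ℝ → ℝ) (m : ℤ) : ℂ :=
  (1 / (2 * π)) * ∫ t in (-π)..π, (f t : ℂ) * Complex.exp (-Complex.I * m * t)

/-- `f` belongs to the periodic Sobolev space `H^s(𝕊)`. -/
def MemHPer (s : ℝ) (f : ℝ → ℝ) : Prop :=
  Function.Periodic f (2 * π) ∧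
    Summable fun m : ℤ => (1 + (m : ℝ) ^ 2) ^ s * ‖periodicFourierCoeff f m‖ ^ 2

open scoped NNReal Topology

lemma HolderWith.of_dist_le {X Y : Type*} [PseudoMetricSpace X] [PseudoMetricSpace Y]
    {C r : ℝ≥0} {f : X → Y} (h : ∀ x y, dist (f x) (f y) ≤ C * dist x y ^ (r : ℝ)) :
    HolderWith C r f := by
  intro x y
  rw [edist_nndist, edist_nndist, ← ENNReal.coe_rpow_of_nonneg _ r.coe_nonneg, ← ENNReal.coe_mul,
    ENNReal.coe_le_coe, ← NNReal.coe_le_coe]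
  simpa using h x y

lemma summable_norm_mul_abs_rpow {c : ℤ → ℂ} {s r : ℝ} (hr : 0 ≤ r) (hrs : r - s < -1 / 2)
    (hc : Summable fun m : ℤ => (1 + (m : ℝ) ^ 2) ^ s * ‖c m‖ ^ 2) :
    Summable fun m : ℤ => ‖c m‖ * |(m : ℝ)| ^ r := by
  have hw : Summable fun m : ℤ => (1 + (m : ℝ) ^ 2) ^ (r - s) := by
    refine (summable_abs_int_rpow (b := 2 * (s - r)) (by linarith)).of_norm_bounded_eventually ?_
    filter_upwards [(Set.finite_singleton (0 : ℤ)).compl_mem_cofinite] with m hm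
    have hm : 0 < |(m : ℝ)| := abs_pos.2 (Int.cast_ne_zero.2 hm)
    rw [norm_of_nonneg (by positivity), neg_mul_eq_mul_neg, neg_sub, rpow_mul hm.le,
      rpow_two, sq_abs]
    exact rpow_le_rpow_of_nonpos (by rw [← sq_abs]; exact pow_pos hm 2) (by linarith) (by linarith)
  refine Summable.of_nonneg_of_le (fun m => by positivity) (fun m => ?_) (hc.add hw)
  set w := 1 + (m : ℝ) ^ 2
  have hw0 : 0 < w := by positivity
  have habs : |(m : ℝ)| ^ r ≤ w ^ (s / 2) * w ^ ((r - s) / 2) := by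
    rw [← rpow_add hw0, show s / 2 + (r - s) / 2 = (1 / 2) * r by ring, rpow_mul hw0.le,
      ← sqrt_eq_rpow]
    exact rpow_le_rpow (abs_nonneg _) (le_sqrt_of_sq_le (by rw [sq_abs]; linarith)) hr
  have hsq : ∀ p : ℝ, w ^ (p / 2) * w ^ (p / 2) = w ^ p := fun p => by
    rw [← rpow_add hw0, add_halves]
  nlinarith [mul_le_mul_of_nonneg_left habs (norm_nonneg (c m)), hsq s, hsq (r - s),
    sq_nonneg (w ^ (s / 2) * ‖c m‖ - w ^ ((r - s) / 2))]

lemma fourier_coe_two_pi (n : ℤ) (x : ℝ) :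
    fourier n (x : AddCircle (2 * π)) = Complex.exp (Complex.I * n * x) := by
  rw [fourier_coe_apply]
  congr 1
  field_simp
  push_cast
  ring

lemma hasSum_periodicFourierCoeff_mul_exp {f : ℝ → ℝ} (hf : Continuous f)
    (hper : Function.Periodic f (2 * π))
    (hsum : Summable fun m : ℤ => ‖periodicFourierCoeff f m‖) (x : ℝ) :
    HasSum (fun m : ℤ => periodicFourierCoeff f m * Complex.exp (Complex.I * m * x)) (f x) := by
  have : Fact (0 < 2 * π) := ⟨by positivity⟩
  have hperC : Function.Periodic (fun t => (f t : ℂ)) (2 * π) := fun t => by simp [hper t]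
  let G : C(AddCircle (2 * π), ℂ) :=
    ⟨hperC.lift, (Complex.continuous_ofReal.comp hf).quotient_liftOn' _⟩
  have hG : ∀ t : ℝ, G t = f t := fun t => rfl
  have hcoeff : fourierCoeff G = periodicFourierCoeff f := by
    ext n
    rw [fourierCoeff_eq_intervalIntegral _ n (-π), show -π + 2 * π = π by ring,
      periodicFourierCoeff, Complex.real_smul, Complex.ofReal_div, Complex.ofReal_one,
      Complex.ofReal_mul, Complex.ofReal_ofNat]
    congr 1
    refine intervalIntegral.integral_congr fun t _ => ?_
    rw [smul_eq_mul, hG, fourier_coe_two_pi, mul_comm]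
    push_cast
    ring_nf
  have h := has_pointwise_sum_fourier_series_of_summable (f := G)
    (by rw [hcoeff]; exact hsum.of_norm) (x : AddCircle (2 * π))
  simpa only [hcoeff, hG, fourier_coe_two_pi, smul_eq_mul] using h

lemma norm_exp_I_mul_sub_one_le_rpow (θ : ℝ) {β : ℝ} (hβ0 : 0 ≤ β) (hβ1 : β ≤ 1) :
    ‖Complex.exp (Complex.I * θ) - 1‖ ≤ 2 * |θ| ^ β := by
  rcases le_or_gt |θ| 1 with hθ | hθ
  · calc _ ≤ |θ| := Real.norm_exp_I_mul_ofReal_sub_one_le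
      _ ≤ |θ| ^ β := by simpa using rpow_le_rpow_of_exponent_ge' (abs_nonneg θ) hθ hβ0 hβ1
      _ ≤ 2 * |θ| ^ β := by linarith [rpow_nonneg (abs_nonneg θ) β]
  · calc _ ≤ ‖Complex.exp (Complex.I * θ)‖ + ‖(1 : ℂ)‖ := norm_sub_le _ _
      _ = 2 := by rw [mul_comm, Complex.norm_exp_ofReal_mul_I, norm_one]; norm_num
      _ ≤ 2 * |θ| ^ β := by linarith [one_le_rpow hθ.le hβ0]

lemma norm_exp_sub_exp_le (m : ℤ) (x y : ℝ) {β : ℝ} (hβ0 : 0 ≤ β) (hβ1 : β ≤ 1) :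
    ‖Complex.exp (Complex.I * m * x) - Complex.exp (Complex.I * m * y)‖ ≤
      2 * |(m : ℝ)| ^ β * |x - y| ^ β := by
  have h := norm_exp_I_mul_sub_one_le_rpow (m * (x - y)) hβ0 hβ1
  rw [abs_mul, mul_rpow (abs_nonneg _) (abs_nonneg _), ← mul_assoc] at h
  calc _ = ‖Complex.exp (Complex.I * m * y)‖ *
        ‖Complex.exp (Complex.I * ↑((m : ℝ) * (x - y))) - 1‖ := by
        rw [← norm_mul, mul_sub, mul_one, ← Complex.exp_add]
        push_cast
        ring_nf
    _ ≤ _ := by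
        rw [show Complex.I * m * y = ((m * y : ℝ) : ℂ) * Complex.I by push_cast; ring,
          Complex.norm_exp_ofReal_mul_I, one_mul]
        exact h

lemma hasDerivAt_tsum_mul_exp {c : ℤ → ℂ} (hc0 : Summable fun m => ‖c m‖)
    (hc1 : Summable fun m : ℤ => ‖c m‖ * |(m : ℝ)|) (x : ℝ) :
    HasDerivAt (fun y : ℝ => ∑' m : ℤ, c m * Complex.exp (Complex.I * m * y))
      (∑' m : ℤ, c m * (Complex.I * m) * Complex.exp (Complex.I * m * x)) x := by
  refine hasDerivAt_tsum (g := fun (m : ℤ) (y : ℝ) => c m * Complex.exp (Complex.I * m * y))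
    (g' := fun m y => c m * (Complex.I * m) * Complex.exp (Complex.I * m * y)) hc1
    (fun m y => ?_) (fun m y => ?_) (y₀ := 0) ?_ x
  · simpa [mul_comm, mul_left_comm, mul_assoc] using
      ((((hasDerivAt_id y).ofReal_comp).const_mul (Complex.I * m)).cexp).const_mul (c m)
  · rw [norm_mul, norm_mul,
      show Complex.I * m * y = ((m * y : ℝ) : ℂ) * Complex.I by push_cast; ring,
      Complex.norm_exp_ofReal_mul_I, norm_mul, Complex.norm_I, one_mul, mul_one,
      Complex.norm_intCast]
  · simpa using hc0.of_norm

lemma holderWith_tsum_mul_exp {b : ℤ → ℂ} {β : ℝ≥0} (hβ : β ≤ 1)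
    (hb0 : Summable fun m => ‖b m‖) (hb : Summable fun m : ℤ => ‖b m‖ * |(m : ℝ)| ^ (β : ℝ)) :
    HolderWith (2 * ∑' m : ℤ, ‖b m‖ * |(m : ℝ)| ^ (β : ℝ)).toNNReal β
      (fun x : ℝ => ∑' m : ℤ, b m * Complex.exp (Complex.I * m * x)) := by
  have hsum : ∀ x : ℝ, Summable fun m : ℤ => b m * Complex.exp (Complex.I * m * x) := fun x =>
    hb0.of_norm_bounded fun m => by
      rw [norm_mul, show Complex.I * m * x = ((m * x : ℝ) : ℂ) * Complex.I by push_cast; ring,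
        Complex.norm_exp_ofReal_mul_I, mul_one]
  have hterm : ∀ x y : ℝ, ∀ m : ℤ,
      ‖b m * Complex.exp (Complex.I * m * x) - b m * Complex.exp (Complex.I * m * y)‖ ≤
        2 * |x - y| ^ (β : ℝ) * (‖b m‖ * |(m : ℝ)| ^ (β : ℝ)) := fun x y m => by
    rw [← mul_sub, norm_mul]
    nlinarith [norm_exp_sub_exp_le m x y β.coe_nonneg (by exact_mod_cast hβ), norm_nonneg (b m)]
  refine HolderWith.of_dist_le fun x y => ?_
  rw [Real.coe_toNNReal _ (by positivity), dist_eq_norm, Real.dist_eq,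
    ← (hsum x).tsum_sub (hsum y)]
  calc _ ≤ ∑' m : ℤ, 2 * |x - y| ^ (β : ℝ) * (‖b m‖ * |(m : ℝ)| ^ (β : ℝ)) :=
        tsum_of_norm_bounded (hb.mul_left _).hasSum (hterm x y)
    _ = _ := by rw [tsum_mul_left]; ring

theorem MemHPer.exists_hasDerivAt_holderWith {s : ℝ} {f : ℝ → ℝ} (hf : Continuous f)
    (hmem : MemHPer s f) {β : ℝ≥0} (hβ1 : β ≤ 1) (hβs : (β : ℝ) < s - 3 / 2) :
    ∃ g : ℝ → ℝ, ∃ L : ℝ≥0, (∀ x, HasDerivAt f (g x) x) ∧ HolderWith L β g := by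
  set c := periodicFourierCoeff f
  have hsum : ∀ r : ℝ, 0 ≤ r → r < s - 1 / 2 → Summable fun m : ℤ => ‖c m‖ * |(m : ℝ)| ^ r :=
    fun r hr hrs => summable_norm_mul_abs_rpow hr (by linarith) hmem.2
  have hc0 : Summable fun m => ‖c m‖ := by simpa using hsum 0 le_rfl (by linarith)
  have hc1 : Summable fun m : ℤ => ‖c m‖ * |(m : ℝ)| := by
    simpa using hsum 1 zero_le_one (by linarith)
  have hnorm : ∀ m : ℤ, ‖c m * (Complex.I * m)‖ = ‖c m‖ * |(m : ℝ)| := fun m => by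
    rw [norm_mul, norm_mul, Complex.norm_I, one_mul, Complex.norm_intCast]
  have hb0 : Summable fun m : ℤ => ‖c m * (Complex.I * m)‖ := by simpa only [hnorm] using hc1
  have hb : Summable fun m : ℤ => ‖c m * (Complex.I * m)‖ * |(m : ℝ)| ^ (β : ℝ) := by
    refine (hsum (1 + β) (by positivity) (by linarith)).congr fun m => ?_
    rw [hnorm, mul_assoc, ← rpow_one_add' (abs_nonneg _) (by positivity)]
  have hD := (holderWith_one.2 Complex.reCLM.lipschitz).comp (holderWith_tsum_mul_exp hβ1 hb0 hb)
  rw [one_mul] at hD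
  refine ⟨_, _, fun x => ?_, hD⟩
  refine (Complex.reCLM.hasFDerivAt.comp_hasDerivAt x (hasDerivAt_tsum_mul_exp hc0 hc1 x))
    |>.congr_of_eventuallyEq (Eventually.of_forall fun y => ?_)
  exact (congrArg Complex.re (hasSum_periodicFourierCoeff_mul_exp hf hmem.1 hc0 y).tsum_eq).symm

lemma setIntegral_abs_mem_Ioo_eq {k : ℝ → ℝ} (hk : ContinuousOn k {0}ᶜ) {ε R : ℝ} (hε : 0 < ε)
    (hεR : ε ≤ R) :
    ∫ t in {t | ε < |t| ∧ |t| < R}, k t = ∫ t in ε..R, (k t + k (-t)) := by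
  have hset : {t : ℝ | ε < |t| ∧ |t| < R} = Set.Ioo ε R ∪ Set.Ioo (-R) (-ε) := by
    ext t
    simp only [Set.mem_ofPred_eq, Set.mem_union, Set.mem_Ioo, lt_abs, abs_lt]
    constructor
    · rintro ⟨h | h, h1, h2⟩ <;> [left; right] <;> constructor <;> linarith
    · rintro (⟨h1, h2⟩ | ⟨h1, h2⟩) <;> refine ⟨?_, ?_, ?_⟩ <;>
        first | (left; linarith) | (right; linarith) | linarith
  have hI : IntervalIntegrable k volume ε R := by
    refine (hk.mono fun t ht h => ?_).intervalIntegrable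
    rw [Set.uIcc_of_le hεR] at ht; simp_all; linarith [ht.1]
  have hIneg : IntervalIntegrable k volume (-R) (-ε) := by
    refine (hk.mono fun t ht h => ?_).intervalIntegrable
    rw [Set.uIcc_of_le (by linarith)] at ht; simp_all; linarith [ht.2]
  have hI' : IntervalIntegrable (fun t => k (-t)) volume ε R := by
    simpa using ((IntervalIntegrable.iff_comp_neg (by simp)).1 hIneg).symm
  rw [hset, setIntegral_union (Set.disjoint_left.2 fun t h1 h2 => by linarith [h1.1, h2.2])
      measurableSet_Ioo
      ((intervalIntegrable_iff_integrableOn_Ioo_of_le hεR).1 hI)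
      ((intervalIntegrable_iff_integrableOn_Ioo_of_le (by linarith)).1 hIneg),
    ← integral_Ioc_eq_integral_Ioo, ← integral_Ioc_eq_integral_Ioo,
    ← intervalIntegral.integral_of_le hεR, ← intervalIntegral.integral_of_le (by linarith),
    intervalIntegral.integral_add hI hI', intervalIntegral.integral_comp_neg (fun t => k t)]

theorem tendsto_setIntegral_abs_mem_Ioo {k : ℝ → ℝ} (hk : ContinuousOn k {0}ᶜ) {R : ℝ}
    (hR : 0 < R) (hint : IntervalIntegrable (fun t => k t + k (-t)) volume 0 R) :
    Tendsto (fun ε => ∫ t in {t | ε < |t| ∧ |t| < R}, k t) (𝓝[>] 0)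
      (𝓝 (∫ t in 0..R, (k t + k (-t)))) := by
  have hcont := intervalIntegral.continuousOn_primitive_interval_left
    ((intervalIntegrable_iff' (μ := volume)).1 hint) 0 Set.left_mem_uIcc
  rw [Set.uIcc_of_le hR.le] at hcont
  refine (hcont.tendsto.mono_left (nhdsWithin_le_of_mem (Icc_mem_nhdsGT hR))).congr' ?_
  filter_upwards [Ioo_mem_nhdsGT hR] with ε hε
  exact (setIntegral_abs_mem_Ioo_eq hk hε.1 hε.2.le).symm

lemma abs_inv_one_add_sq_sub_inv_one_add_sq_le (a b : ℝ) :
    |(1 + a ^ 2)⁻¹ - (1 + b ^ 2)⁻¹| ≤ |a - b| := by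
  have ha : 0 < 1 + a ^ 2 := by positivity
  have hb : 0 < 1 + b ^ 2 := by positivity
  have hab : |a + b| ≤ (1 + a ^ 2) * (1 + b ^ 2) := by
    have := abs_add_le a b
    nlinarith [sq_nonneg (|a| - 1), sq_nonneg (|b| - 1), sq_abs a, sq_abs b,
      mul_nonneg (sq_nonneg a) (sq_nonneg b)]
  rw [inv_sub_inv ha.ne' hb.ne', abs_div, abs_of_pos (mul_pos ha hb), div_le_iff₀ (mul_pos ha hb),
    show 1 + b ^ 2 - (1 + a ^ 2) = -((a - b) * (a + b)) by ring, abs_neg, abs_mul]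
  exact mul_le_mul_of_nonneg_left hab (abs_nonneg _)

noncomputable def pvKernel (F : ℝ → ℝ) (x t : ℝ) : ℝ :=
  (1 / t) * (1 + ((F x - F (x - t)) / t) ^ 2)⁻¹

noncomputable def phi6 (F : ℝ → ℝ) (x : ℝ) : ℝ :=
  ∫ t in 0..π, (pvKernel F x t + pvKernel F x (-t))

lemma pvKernel_add_pvKernel_neg (F : ℝ → ℝ) (x t : ℝ) :
    pvKernel F x t + pvKernel F x (-t) =
      t⁻¹ * ((1 + slope F (x - t) x ^ 2)⁻¹ - (1 + slope F x (x + t) ^ 2)⁻¹) := by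
  simp only [pvKernel, slope_def_field, sub_sub_cancel, sub_neg_eq_add, add_sub_cancel_left,
    div_neg, neg_sq]
  ring_nf

lemma continuousOn_pvKernel {F : ℝ → ℝ} (hF : Continuous F) (x : ℝ) :
    ContinuousOn (pvKernel F x) {0}ᶜ := by
  unfold pvKernel
  fun_prop (disch := first | positivity | (intro t ht; positivity) | simp_all)

section HolderDerivative

variable {F g : ℝ → ℝ} {L β : ℝ≥0}

lemma abs_slope_sub_slope_le (hF : ∀ x, HasDerivAt F (g x) x) (hg : HolderWith L β g)
    (a b t : ℝ) : |slope F a (a + t) - slope F b (b + t)| ≤ L * |a - b| ^ (β : ℝ) := by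
  have hG : ‖(F (a + t) - F (b + t)) - (F (a + 0) - F (b + 0))‖ ≤
      L * |a - b| ^ (β : ℝ) * ‖t - 0‖ := by
    refine Convex.norm_image_sub_le_of_norm_hasDerivWithin_le
      (f := fun u => F (a + u) - F (b + u))
      (fun u _ => (((hF _).comp_const_add a u).sub ((hF _).comp_const_add b u)).hasDerivWithinAt)
      (fun u _ => ?_) convex_univ (Set.mem_univ _) (Set.mem_univ _)
    simpa [Real.dist_eq] using hg.dist_le (a + u) (b + u)
  rcases eq_or_ne t 0 with rfl | ht
  · simp only [add_zero, slope_same, sub_self, abs_zero]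
    positivity
  rw [slope_def_field, slope_def_field, add_sub_cancel_left, add_sub_cancel_left, ← sub_div,
    abs_div, div_le_iff₀ (abs_pos.2 ht)]
  simpa [Real.norm_eq_abs, sub_sub_sub_comm] using hG

lemma abs_pvKernel_add_pvKernel_neg_le (hF : ∀ x, HasDerivAt F (g x) x) (hg : HolderWith L β g)
    (x : ℝ) {t : ℝ} (ht : 0 < t) :
    |pvKernel F x t + pvKernel F x (-t)| ≤ L * t ^ ((β : ℝ) - 1) := by
  have hslope := abs_slope_sub_slope_le hF hg (x - t) x t
  rw [sub_add_cancel, sub_sub_cancel_left, abs_neg, abs_of_pos ht] at hslope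
  rw [pvKernel_add_pvKernel_neg, abs_mul, abs_inv, abs_of_pos ht, rpow_sub_one ht.ne',
    mul_div_assoc', le_div_iff₀ ht, inv_mul_eq_div, div_mul_cancel₀ _ ht.ne']
  exact (abs_inv_one_add_sq_sub_inv_one_add_sq_le _ _).trans hslope

lemma abs_pvKernel_add_pvKernel_neg_sub_le (hF : ∀ x, HasDerivAt F (g x) x)
    (hg : HolderWith L β g) (x y : ℝ) {t : ℝ} (ht : 0 < t) :
    |(pvKernel F x t + pvKernel F x (-t)) - (pvKernel F y t + pvKernel F y (-t))| ≤
      2 * L * |x - y| ^ (β : ℝ) / t := by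
  have hleft := abs_slope_sub_slope_le hF hg (x - t) (y - t) t
  rw [sub_add_cancel, sub_add_cancel, sub_sub_sub_cancel_right] at hleft
  have hright := abs_slope_sub_slope_le hF hg x y t
  rw [pvKernel_add_pvKernel_neg, pvKernel_add_pvKernel_neg, ← mul_sub, abs_mul, abs_inv,
    abs_of_pos ht, inv_mul_eq_div, div_le_div_iff_of_pos_right ht]
  calc _ ≤ |(1 + slope F (x - t) x ^ 2)⁻¹ - (1 + slope F (y - t) y ^ 2)⁻¹| +
        |(1 + slope F x (x + t) ^ 2)⁻¹ - (1 + slope F y (y + t) ^ 2)⁻¹| := by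
        rw [sub_sub_sub_comm]; exact abs_sub _ _
    _ ≤ L * |x - y| ^ (β : ℝ) + L * |x - y| ^ (β : ℝ) := by
        gcongr
        · exact (abs_inv_one_add_sq_sub_inv_one_add_sq_le _ _).trans hleft
        · exact (abs_inv_one_add_sq_sub_inv_one_add_sq_le _ _).trans hright
    _ = 2 * L * |x - y| ^ (β : ℝ) := by ring

lemma abs_pvKernel_add_pvKernel_neg_sub_le_rpow (hF : ∀ x, HasDerivAt F (g x) x)
    (hg : HolderWith L β g) {α : ℝ≥0} (hαβ : α ≤ β) (x y : ℝ) {t : ℝ} (ht : 0 < t) :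
    |(pvKernel F x t + pvKernel F x (-t)) - (pvKernel F y t + pvKernel F y (-t))| ≤
      2 * L * |x - y| ^ (α : ℝ) * t ^ ((β : ℝ) - α - 1) := by
  have hαβ' : (0 : ℝ) ≤ β - α := sub_nonneg.2 (by exact_mod_cast hαβ)
  rcases le_or_gt t |x - y| with hnear | hfar
  · calc _ ≤ |pvKernel F x t + pvKernel F x (-t)| + |pvKernel F y t + pvKernel F y (-t)| :=
          abs_sub _ _
      _ ≤ 2 * L * t ^ ((β : ℝ) - 1) := by
          linarith [abs_pvKernel_add_pvKernel_neg_le hF hg x ht,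
            abs_pvKernel_add_pvKernel_neg_le hF hg y ht]
      _ = 2 * L * t ^ (α : ℝ) * t ^ ((β : ℝ) - α - 1) := by
          rw [mul_assoc _ (t ^ _), ← rpow_add ht]; ring_nf
      _ ≤ 2 * L * |x - y| ^ (α : ℝ) * t ^ ((β : ℝ) - α - 1) := by gcongr
  · calc _ ≤ 2 * L * |x - y| ^ (β : ℝ) / t := abs_pvKernel_add_pvKernel_neg_sub_le hF hg x y ht
      _ = 2 * L * |x - y| ^ (α : ℝ) * (|x - y| ^ ((β : ℝ) - α) / t) := by
          rw [← mul_div_assoc, mul_assoc _ (|x - y| ^ _), ← rpow_add_of_nonneg (abs_nonneg _)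
            α.coe_nonneg hαβ', add_sub_cancel]
      _ ≤ 2 * L * |x - y| ^ (α : ℝ) * t ^ ((β : ℝ) - α - 1) := by
          rw [rpow_sub_one ht.ne']
          gcongr

lemma intervalIntegrable_pvKernel_add_pvKernel_neg (hF : ∀ x, HasDerivAt F (g x) x)
    (hg : HolderWith L β g) (hβ : 0 < β) (x : ℝ) :
    IntervalIntegrable (fun t => pvKernel F x t + pvKernel F x (-t)) volume 0 π := by
  have hFm : Measurable F :=
    (continuous_iff_continuousAt.2 fun x => (hF x).continuousAt).measurable
  refine ((intervalIntegral.intervalIntegrable_rpow' (r := (β : ℝ) - 1) (by simpa)).const_mul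
    (L : ℝ)).mono_fun' (by unfold pvKernel; fun_prop) ?_
  rw [Set.uIoc_of_le pi_pos.le]
  exact ae_restrict_of_forall_mem measurableSet_Ioc fun t ht =>
    abs_pvKernel_add_pvKernel_neg_le hF hg x ht.1

lemma holderWith_phi6 (hF : ∀ x, HasDerivAt F (g x) x) (hg : HolderWith L β g) {α : ℝ≥0}
    (hαβ : α < β) :
    HolderWith (2 * L * π ^ ((β : ℝ) - α) / ((β : ℝ) - α)).toNNReal α (phi6 F) := by
  have hαβ' : (0 : ℝ) < β - α := sub_pos.2 (by exact_mod_cast hαβ)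
  have hβ : 0 < β := zero_le.trans_lt hαβ
  refine HolderWith.of_dist_le fun x y => ?_
  rw [Real.coe_toNNReal _ (by positivity), dist_eq, dist_eq, phi6, phi6,
    ← intervalIntegral.integral_sub (intervalIntegrable_pvKernel_add_pvKernel_neg hF hg hβ x)
      (intervalIntegrable_pvKernel_add_pvKernel_neg hF hg hβ y)]
  calc _ ≤ ∫ t in 0..π, 2 * L * |x - y| ^ (α : ℝ) * t ^ ((β : ℝ) - α - 1) := by
        rw [← norm_eq_abs]
        refine intervalIntegral.norm_integral_le_of_norm_le pi_pos.le (ae_of_all _ fun t ht => ?_)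
          ((intervalIntegral.intervalIntegrable_rpow' (by linarith)).const_mul _)
        exact abs_pvKernel_add_pvKernel_neg_sub_le_rpow hF hg hαβ.le x y ht.1
    _ = 2 * L * π ^ ((β : ℝ) - α) / ((β : ℝ) - α) * |x - y| ^ (α : ℝ) := by
        rw [intervalIntegral.integral_const_mul, integral_rpow (Or.inl (by linarith)),
          sub_add_cancel, zero_rpow hαβ'.ne', sub_zero]
        ring

lemma phi6_periodic {T : ℝ} (hF : Function.Periodic F T) : Function.Periodic (phi6 F) T := by
  intro x
  simp only [phi6, pvKernel, add_sub_right_comm x T, hF _]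

lemma tendsto_phi6 (hF : ∀ x, HasDerivAt F (g x) x) (hg : HolderWith L β g) (hβ : 0 < β)
    (x : ℝ) :
    Tendsto (fun ε => ∫ t in {t | ε < |t| ∧ |t| < π}, pvKernel F x t) (𝓝[>] 0)
      (𝓝 (phi6 F x)) :=
  tendsto_setIntegral_abs_mem_Ioo
    (continuousOn_pvKernel (continuous_iff_continuousAt.2 fun x => (hF x).continuousAt) x)
    pi_pos (intervalIntegrable_pvKernel_add_pvKernel_neg hF hg hβ x)

end HolderDerivative

/-- Let `f ∈ H^s(𝕊)`, `s ∈ (3/2,2)`, and `α := s/2 - 3/4 ∈ (0,1/4)`. Then for each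
`τ ∈ [0,1]` the principal value
`φ₆(τf)(x) = PV ∫_{-π}^{π} (1/s')·(1 + ((τf(x)-τf(x-s'))/s')²)⁻¹ ds'`
exists for every `x`, `φ₆(τf)` is `2π`-periodic and `α`-Hölder continuous, with
Hölder bound uniform in `τ ∈ [0,1]`. -/
theorem phi6_holder (s : ℝ) (hs : s ∈ Set.Ioo (3 / 2 : ℝ) 2)
    (f : ℝ → ℝ) (hf : Continuous f) (hmem : MemHPer s f) :
    ∃ φ : ℝ → ℝ → ℝ,
      (∀ τ ∈ Set.Icc (0 : ℝ) 1, ∀ x : ℝ,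
        Tendsto (fun ε : ℝ =>
            ∫ t in {t : ℝ | ε < |t| ∧ |t| < π},
              (1 / t) * (1 + ((τ * f x - τ * f (x - t)) / t) ^ 2)⁻¹)
          (nhdsWithin 0 (Set.Ioi 0)) (nhds (φ τ x))) ∧
      (∀ τ ∈ Set.Icc (0 : ℝ) 1, Function.Periodic (φ τ) (2 * π)) ∧
      ∃ K : NNReal, ∀ τ ∈ Set.Icc (0 : ℝ) 1,
        HolderWith K (Real.toNNReal (s / 2 - 3 / 4)) (φ τ) := by
  obtain ⟨hs1, hs2⟩ := hs
  set α := (s / 2 - 3 / 4).toNNReal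
  set β := (3 * s / 4 - 9 / 8).toNNReal
  have hα : (α : ℝ) = s / 2 - 3 / 4 := Real.coe_toNNReal _ (by linarith)
  have hβ : (β : ℝ) = 3 * s / 4 - 9 / 8 := Real.coe_toNNReal _ (by linarith)
  have hαβ : α < β := by rw [← NNReal.coe_lt_coe, hα, hβ]; linarith
  obtain ⟨g, L, hder, hg⟩ := hmem.exists_hasDerivAt_holderWith hf
    (by rw [← NNReal.coe_le_coe, hβ, NNReal.coe_one]; linarith) (by rw [hβ]; linarith)
  have hscaled : ∀ τ ∈ Set.Icc (0 : ℝ) 1, (∀ x, HasDerivAt (fun y => τ * f y) (τ * g x) x) ∧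
      HolderWith L β (fun x => τ * g x) := fun τ hτ =>
    ⟨fun x => (hder x).const_mul τ, (hg.smul τ).mono <| mul_le_of_le_one_right zero_le <| by
      rw [← NNReal.coe_le_coe, coe_nnnorm, norm_of_nonneg hτ.1]; exact hτ.2⟩
  refine ⟨fun τ => phi6 (fun y => τ * f y), fun τ hτ x => ?_,
    fun τ _ => phi6_periodic fun x => by simp only [hmem.1 x],
    (2 * L * π ^ ((β : ℝ) - α) / ((β : ℝ) - α)).toNNReal, fun τ hτ => ?_⟩
  · exact tendsto_phi6 (hscaled τ hτ).1 (hscaled τ hτ).2 (zero_le.trans_lt hαβ) x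
  · exact holderWith_phi6 (hscaled τ hτ).1 (hscaled τ hτ).2 hαβ
end

section
/- Let f ∈ H^2(𝕊) be real-valued and define ω̄ := -(k Δρ / μ) f' ∈ H^1(𝕊), where k, Δρ, μ > 0 are constants. Define for (x, y) ∈ ℝ² with y ≠ f(x): ṽ¹(x,y) := -(1/4π) ∫_{-π}^{π} ω̄(s) · tanh((y - f(s))/2)(1 + tan²((x-s)/2)) / (tan²((x-s)/2) + tanh²((y-f(s))/2)) ds and ṽ²(x,y) := (1/4π) ∫_{-π}^{π} ω̄(s) · tan((x-s)/2)(1 - tanh²((y-f(s))/2)) / (tan²((x-s)/2) + tanh²((y-f(s))/2)) ds. Then ṽ = (ṽ¹, ṽ²) is C¹ on ℝ² \ {y = f(x)}, is 2π-periodic in x, and satisfies div ṽ = 0 and rot ṽ = ∂_x ṽ² - ∂_y ṽ¹ = 0 on each of the open regions {y < f(x)} and {y > f(x)}. -/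
open MeasureTheory Real

/-!
The field is the real form of a holomorphic function: with `z = x + i y`,
`ṽ² + i ṽ¹ = (4π)⁻¹ ∫ ω̄(s) cot((z - (s + i f(s)))/2) ds`, which follows from
`cot(a + i b) = (tan a (1 - tanh² b) - i tanh b (1 + tan² a)) / (tan² a + tanh² b)`.
The integrand is holomorphic in `z` away from the `2π`-translates of the curve `s ↦ s + i f(s)`,
which by periodicity of `f` is exactly the complement of the graph, so differentiating under
the integral gives holomorphy there. Smoothness follows, and the Cauchy–Riemann equations for
`ṽ² + i ṽ¹` are precisely `div ṽ = 0` and `rot ṽ = 0`.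
-/

open Set Filter
open scoped Interval Topology

theorem hasDerivAt_intervalIntegral_of_continuousOn {𝕜 E : Type*} [RCLike 𝕜]
    [NormedAddCommGroup E] [NormedSpace ℝ E] [NormedSpace 𝕜 E] {μ : Measure ℝ}
    [IsLocallyFiniteMeasure μ] {a b : ℝ} {F F' : 𝕜 → ℝ → E} {U : Set 𝕜} {x₀ : 𝕜}
    (hU : IsOpen U) (hx₀ : x₀ ∈ U) (hF : ∀ x ∈ U, ContinuousOn (F x) [[a, b]])
    (hF' : ContinuousOn (Function.uncurry F') (U ×ˢ [[a, b]]))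
    (hderiv : ∀ x ∈ U, ∀ t ∈ [[a, b]], HasDerivAt (F · t) (F' x t) x) :
    HasDerivAt (fun x => ∫ t in a..b, F x t ∂μ) (∫ t in a..b, F' x₀ t ∂μ) x₀ := by
  obtain ⟨r, hr, hball⟩ := Metric.isOpen_iff.mp hU x₀ hx₀
  have hsub : Metric.closedBall x₀ (r / 2) ⊆ U :=
    (Metric.closedBall_subset_ball (by linarith)).trans hball
  obtain ⟨C, hC⟩ := ((isCompact_closedBall x₀ (r / 2)).prod isCompact_uIcc)
    |>.exists_bound_of_continuousOn (hF'.mono (prod_mono hsub subset_rfl))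
  have hmeas : ∀ {g : ℝ → E}, ContinuousOn g [[a, b]] →
      AEStronglyMeasurable g (μ.restrict (Ι a b)) :=
    fun hg => (hg.aestronglyMeasurable measurableSet_uIcc).mono_measure
      (Measure.restrict_mono uIoc_subset_uIcc le_rfl)
  refine (intervalIntegral.hasDerivAt_integral_of_dominated_loc_of_deriv_le
    (bound := fun _ => C) (Metric.ball_mem_nhds x₀ (half_pos hr))
    (eventually_of_mem (hU.mem_nhds hx₀) fun x hx => hmeas (hF x hx))
    ((hF x₀ hx₀).intervalIntegrable) (hmeas ?_) ?_ intervalIntegrable_const ?_).2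
  · exact hF'.comp (Continuous.prodMk_right x₀).continuousOn fun t ht => ⟨hx₀, ht⟩
  · exact ae_of_all _ fun t ht x hx =>
      hC (x, t) ⟨Metric.ball_subset_closedBall hx, uIoc_subset_uIcc ht⟩
  · exact ae_of_all _ fun t ht x hx =>
      hderiv x (hsub (Metric.ball_subset_closedBall hx)) t (uIoc_subset_uIcc ht)

namespace Complex

theorem hasDerivAt_cot {z : ℂ} (hz : sin z ≠ 0) : HasDerivAt cot (-1 / sin z ^ 2) z := by
  have h := (hasDerivAt_cos z).div (hasDerivAt_sin z) hz
  rw [show cos / sin = cot from funext fun w => (cot_eq_cos_div_sin w).symm] at h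
  refine h.congr_deriv ?_
  rw [div_eq_div_iff (pow_ne_zero 2 hz) (pow_ne_zero 2 hz)]
  linear_combination (-(sin z ^ 2)) * sin_sq_add_cos_sq z

theorem cot_add_mul_I (a b : ℝ) (ha : Real.cos a ≠ 0) :
    cot (a + b * I) = (1 - Real.tan a * Real.tanh b * I) / (Real.tan a + Real.tanh b * I) := by
  have ha' : cos (a : ℂ) ≠ 0 := by exact_mod_cast ha
  have hb' : cosh (b : ℂ) ≠ 0 := by exact_mod_cast (Real.cosh_pos b).ne'
  rw [cot_eq_cos_div_sin, cos_add_mul_I, sin_add_mul_I, Real.tan_eq_sin_div_cos,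
    Real.tanh_eq_sinh_div_cosh, ← div_div_div_cancel_right₀ (mul_ne_zero ha' hb')]
  push_cast
  congr 1 <;> field_simp

theorem cot_add_mul_I_re (a b : ℝ) (ha : Real.cos a ≠ 0) :
    (cot (a + b * I)).re =
      Real.tan a * (1 - Real.tanh b ^ 2) / (Real.tan a ^ 2 + Real.tanh b ^ 2) := by
  rw [cot_add_mul_I a b ha]
  generalize Real.tan a = t
  generalize Real.tanh b = h
  simp only [div_re, normSq_apply, add_re, add_im, sub_re, sub_im, mul_re, mul_im,
    ofReal_re, ofReal_im, one_re, one_im, I_re, I_im]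
  ring

theorem cot_add_mul_I_im (a b : ℝ) (ha : Real.cos a ≠ 0) :
    (cot (a + b * I)).im =
      -(Real.tanh b * (1 + Real.tan a ^ 2) / (Real.tan a ^ 2 + Real.tanh b ^ 2)) := by
  rw [cot_add_mul_I a b ha]
  generalize Real.tan a = t
  generalize Real.tanh b = h
  simp only [div_im, normSq_apply, add_re, add_im, sub_re, sub_im, mul_re, mul_im,
    ofReal_re, ofReal_im, one_re, one_im, I_re, I_im]
  ring

end Complex

theorem hasFDerivAt_comp_add_mul_I {G : ℂ → ℂ} {p : ℝ × ℝ}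
    (hG : DifferentiableAt ℂ G (p.1 + p.2 * Complex.I)) :
    HasFDerivAt (fun q : ℝ × ℝ => G (q.1 + q.2 * Complex.I))
      (((fderiv ℂ G (p.1 + p.2 * Complex.I)).restrictScalars ℝ).comp
        Complex.equivRealProdCLM.symm.toContinuousLinearMap) p := by
  simp only [← Complex.equivRealProdCLM_symm_apply] at hG ⊢
  exact (hG.hasFDerivAt.restrictScalars ℝ).comp p Complex.equivRealProdCLM.symm.hasFDerivAt

theorem contDiffOn_comp_add_mul_I {G : ℂ → ℂ} {Ω : Set ℂ} (hG : DifferentiableOn ℂ G Ω)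
    (hΩ : IsOpen Ω) {n : WithTop ℕ∞} :
    ContDiffOn ℝ n (fun q : ℝ × ℝ => G (q.1 + q.2 * Complex.I))
      {q | (q.1 + q.2 * Complex.I : ℂ) ∈ Ω} := by
  simp only [← Complex.equivRealProdCLM_symm_apply]
  exact ((hG.contDiffOn hΩ).restrict_scalars ℝ).comp
    Complex.equivRealProdCLM.symm.contDiff.contDiffOn fun _ hq => hq

theorem div_rot_eq_zero_of_differentiableAt {G : ℂ → ℂ} {v₁ v₂ : ℝ × ℝ → ℝ}
    {p : ℝ × ℝ} (hG : DifferentiableAt ℂ G (p.1 + p.2 * Complex.I))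
    (h₁ : v₁ =ᶠ[𝓝 p] fun q => (G (q.1 + q.2 * Complex.I)).im)
    (h₂ : v₂ =ᶠ[𝓝 p] fun q => (G (q.1 + q.2 * Complex.I)).re) :
    fderiv ℝ v₁ p (1, 0) + fderiv ℝ v₂ p (0, 1) = 0 ∧
      fderiv ℝ v₂ p (1, 0) - fderiv ℝ v₁ p (0, 1) = 0 := by
  have hL := hasFDerivAt_comp_add_mul_I hG
  rw [((Complex.imCLM.hasFDerivAt.comp p hL).congr_of_eventuallyEq h₁).fderiv,
    ((Complex.reCLM.hasFDerivAt.comp p hL).congr_of_eventuallyEq h₂).fderiv]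
  -- Cauchy–Riemann: `ℂ`-linearity makes the derivative along `(0, 1)` equal to `I` times the
  -- derivative along `(1, 0)`.
  simp

theorem sin_half_sub_graph_ne_zero {f : ℝ → ℝ} (hper : Function.Periodic f (2 * π)) {z : ℂ}
    (hz : z.im ≠ f z.re) (s : ℝ) : Complex.sin ((z - (s + f s * Complex.I)) / 2) ≠ 0 := by
  rw [Ne, Complex.sin_eq_zero_iff]
  rintro ⟨n, hn⟩
  have hz' : z = s + f s * Complex.I + (n * (2 * π) : ℝ) := by
    push_cast; linear_combination 2 * hn
  apply hz
  rw [hz']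
  simp [hper.int_mul n s]

theorem ae_cos_half_sub_ne_zero (x : ℝ) : ∀ᵐ s, Real.cos ((x - s) / 2) ≠ 0 := by
  refine measure_eq_zero_iff_ae_notMem.mp (Countable.measure_zero ?_ _)
  refine (countable_range fun n : ℤ => x - (2 * n + 1) * π).mono fun s hs => ?_
  obtain ⟨n, hn⟩ := Real.cos_eq_zero_iff.mp hs
  exact ⟨n, by linarith⟩

noncomputable def cotKernelIntegral (ω f : ℝ → ℝ) (z : ℂ) : ℂ :=
  ∫ s in (-π)..π, ω s * Complex.cot ((z - (s + f s * Complex.I)) / 2)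

section CotKernelIntegral

variable {ω f : ℝ → ℝ}

theorem continuous_cotKernel (hω : Continuous ω) (hf : Continuous f)
    (hper : Function.Periodic f (2 * π)) {z : ℂ} (hz : z.im ≠ f z.re) :
    Continuous fun s => ω s * Complex.cot ((z - (s + f s * Complex.I)) / 2) :=
  continuous_iff_continuousAt.2 fun s =>
    (Complex.continuous_ofReal.comp hω).continuousAt.mul
      ((Complex.hasDerivAt_cot (sin_half_sub_graph_ne_zero hper hz s)).continuousAt.comp
        (f := fun t => (z - (t + f t * Complex.I)) / 2) (by fun_prop))

theorem differentiableOn_cotKernelIntegral (hω : Continuous ω) (hf : Continuous f)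
    (hper : Function.Periodic f (2 * π)) :
    DifferentiableOn ℂ (cotKernelIntegral ω f) {z | z.im ≠ f z.re} := by
  set u : ℂ × ℝ → ℂ := fun q => (q.1 - (q.2 + f q.2 * Complex.I)) / 2
  have hsin : ∀ q : ℂ × ℝ, q.1.im ≠ f q.1.re → Complex.sin (u q) ≠ 0 :=
    fun q hq => sin_half_sub_graph_ne_zero hper hq q.2
  refine fun z hz => (hasDerivAt_intervalIntegral_of_continuousOn
    (isOpen_ne_fun Complex.continuous_im (hf.comp Complex.continuous_re)) hz
    (F' := fun z s => -(ω s / (2 * Complex.sin (u (z, s)) ^ 2)))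
    (fun z hz => (continuous_cotKernel hω hf hper hz).continuousOn) ?_ ?_)
    |>.differentiableAt.differentiableWithinAt
  · refine fun q hq => (ContinuousAt.neg ?_).continuousWithinAt
    exact (Complex.continuous_ofReal.comp (hω.comp continuous_snd)).continuousAt.div
      (by fun_prop) (mul_ne_zero two_ne_zero (pow_ne_zero 2 (hsin q hq.1)))
  · intro z hz s _
    have hdu : HasDerivAt (fun w : ℂ => (w - (s + f s * Complex.I)) / 2) (1 / 2) z :=
      ((hasDerivAt_id z).sub_const _).div_const 2
    refine (((Complex.hasDerivAt_cot (hsin (z, s) hz)).comp z hdu).const_mul (ω s : ℂ))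
      |>.congr_deriv ?_
    field_simp

theorem cotKernelIntegral_add_mul_I_re_im (hω : Continuous ω) (hf : Continuous f)
    (hper : Function.Periodic f (2 * π)) {x y : ℝ} (hxy : y ≠ f x) :
    (cotKernelIntegral ω f (x + y * Complex.I)).re =
        ∫ s in (-π)..π, ω s * (Real.tan ((x - s) / 2) * (1 - Real.tanh ((y - f s) / 2) ^ 2)) /
          (Real.tan ((x - s) / 2) ^ 2 + Real.tanh ((y - f s) / 2) ^ 2) ∧
      (cotKernelIntegral ω f (x + y * Complex.I)).im =
        -∫ s in (-π)..π, ω s * (Real.tanh ((y - f s) / 2) * (1 + Real.tan ((x - s) / 2) ^ 2)) /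
          (Real.tan ((x - s) / 2) ^ 2 + Real.tanh ((y - f s) / 2) ^ 2) := by
  have hint := (continuous_cotKernel hω hf hper (z := x + y * Complex.I) (by simpa using hxy))
    |>.intervalIntegrable (μ := volume) (-π) π
  have harg : ∀ s : ℝ, (x + y * Complex.I - (s + f s * Complex.I)) / 2 =
      (((x - s) / 2 : ℝ) : ℂ) + (((y - f s) / 2 : ℝ) : ℂ) * Complex.I := fun s => by
    push_cast; ring
  rw [cotKernelIntegral, ← Complex.reCLM_apply, ← Complex.imCLM_apply,
    ← Complex.reCLM.intervalIntegral_comp_comm hint,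
    ← Complex.imCLM.intervalIntegral_comp_comm hint, ← intervalIntegral.integral_neg]
  constructor <;> refine intervalIntegral.integral_congr_ae
    ((ae_cos_half_sub_ne_zero x).mono fun s hs _ => ?_)
  · simp only [Complex.reCLM_apply, harg, Complex.re_ofReal_mul, Complex.cot_add_mul_I_re _ _ hs]
    ring
  · simp only [Complex.imCLM_apply, harg, Complex.im_ofReal_mul, Complex.cot_add_mul_I_im _ _ hs]
    ring

end CotKernelIntegral

theorem velocity_field_div_rot_free_general (k Δρ μ : ℝ)
    (f : ℝ → ℝ) (hf : ContDiff ℝ 1 f) (hper : Function.Periodic f (2 * π))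
    (v1 v2 : ℝ × ℝ → ℝ)
    (hv1 : ∀ p : ℝ × ℝ, v1 p = -(1 / (4 * π)) *
      ∫ s in (-π)..π, (-(k * Δρ / μ) * deriv f s) *
        (Real.tanh ((p.2 - f s) / 2) * (1 + Real.tan ((p.1 - s) / 2) ^ 2)) /
          (Real.tan ((p.1 - s) / 2) ^ 2 + Real.tanh ((p.2 - f s) / 2) ^ 2))
    (hv2 : ∀ p : ℝ × ℝ, v2 p = (1 / (4 * π)) *
      ∫ s in (-π)..π, (-(k * Δρ / μ) * deriv f s) *
        (Real.tan ((p.1 - s) / 2) * (1 - Real.tanh ((p.2 - f s) / 2) ^ 2)) /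
          (Real.tan ((p.1 - s) / 2) ^ 2 + Real.tanh ((p.2 - f s) / 2) ^ 2)) :
    ContDiffOn ℝ 1 v1 {p : ℝ × ℝ | p.2 ≠ f p.1} ∧
    ContDiffOn ℝ 1 v2 {p : ℝ × ℝ | p.2 ≠ f p.1} ∧
    (∀ p : ℝ × ℝ, v1 (p.1 + 2 * π, p.2) = v1 p ∧ v2 (p.1 + 2 * π, p.2) = v2 p) ∧
    (∀ p ∈ {p : ℝ × ℝ | p.2 ≠ f p.1},
      fderiv ℝ v1 p (1, 0) + fderiv ℝ v2 p (0, 1) = 0 ∧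
      fderiv ℝ v2 p (1, 0) - fderiv ℝ v1 p (0, 1) = 0) := by
  set ω : ℝ → ℝ := fun s => -(k * Δρ / μ) * deriv f s
  set U := {p : ℝ × ℝ | p.2 ≠ f p.1}
  set G : ℂ → ℂ := fun z => ((1 / (4 * π) : ℝ) : ℂ) * cotKernelIntegral ω f z
  have hω : Continuous ω := continuous_const.mul (hf.continuous_deriv le_rfl)
  have hΩ : IsOpen {z : ℂ | z.im ≠ f z.re} :=
    isOpen_ne_fun Complex.continuous_im (hf.continuous.comp Complex.continuous_re)
  have hU : IsOpen U := isOpen_ne_fun continuous_snd (hf.continuous.comp continuous_fst)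
  have hG : DifferentiableOn ℂ G {z | z.im ≠ f z.re} :=
    (differentiableOn_cotKernelIntegral hω hf.continuous hper).const_mul _
  have hGC : ContDiffOn ℝ 1 (fun q : ℝ × ℝ => G (q.1 + q.2 * Complex.I)) U := by
    simpa using contDiffOn_comp_add_mul_I hG hΩ (n := 1)
  have hv1G : EqOn v1 (fun q => (G (q.1 + q.2 * Complex.I)).im) U := fun p hp => by
    simp only [G, hv1 p, Complex.im_ofReal_mul,
      (cotKernelIntegral_add_mul_I_re_im hω hf.continuous hper hp).2]
    ring
  have hv2G : EqOn v2 (fun q => (G (q.1 + q.2 * Complex.I)).re) U := fun p hp => by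
    simp only [G, ω, hv2 p, Complex.re_ofReal_mul,
      (cotKernelIntegral_add_mul_I_re_im hω hf.continuous hper hp).1]
  have htan : ∀ x s : ℝ, Real.tan ((x + 2 * π - s) / 2) = Real.tan ((x - s) / 2) :=
    fun x s => by rw [show (x + 2 * π - s) / 2 = (x - s) / 2 + π by ring, Real.tan_add_pi]
  refine ⟨(Complex.imCLM.contDiff.comp_contDiffOn hGC).congr hv1G,
    (Complex.reCLM.contDiff.comp_contDiffOn hGC).congr hv2G,
    fun p => ⟨by simp only [hv1, htan], by simp only [hv2, htan]⟩, fun p hp => ?_⟩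
  exact div_rot_eq_zero_of_differentiableAt
    (hG.differentiableAt (hΩ.mem_nhds (by simpa [U] using hp)))
    (eventually_of_mem (hU.mem_nhds hp) hv1G) (eventually_of_mem (hU.mem_nhds hp) hv2G)

/-- Let `f ∈ H²(𝕊)` and `ω̄ := -(kΔρ/μ) f'`. The velocity field `ṽ = (ṽ¹, ṽ²)` defined
by the periodic contour integrals is `C¹` off the graph of `f`, `2π`-periodic in `x`, and
satisfies `div ṽ = 0` and `rot ṽ = 0` in both open regions `{y < f(x)}` and `{y > f(x)}`. -/
theorem velocity_field_div_rot_free (k Δρ μ : ℝ) (hk : 0 < k) (hΔ : 0 < Δρ) (hμ : 0 < μ)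
    (f : ℝ → ℝ) (hf : ContDiff ℝ 1 f) (hper : Function.Periodic f (2 * π))
    (hH2 : Summable fun m : ℤ =>
      (1 + (m : ℝ) ^ 2) ^ (2 : ℝ) * ‖periodicFourierCoeff f m‖ ^ 2)
    (v1 v2 : ℝ × ℝ → ℝ)
    (hv1 : ∀ p : ℝ × ℝ, v1 p = -(1 / (4 * π)) *
      ∫ s in (-π)..π, (-(k * Δρ / μ) * deriv f s) *
        (Real.tanh ((p.2 - f s) / 2) * (1 + Real.tan ((p.1 - s) / 2) ^ 2)) /
          (Real.tan ((p.1 - s) / 2) ^ 2 + Real.tanh ((p.2 - f s) / 2) ^ 2))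
    (hv2 : ∀ p : ℝ × ℝ, v2 p = (1 / (4 * π)) *
      ∫ s in (-π)..π, (-(k * Δρ / μ) * deriv f s) *
        (Real.tan ((p.1 - s) / 2) * (1 - Real.tanh ((p.2 - f s) / 2) ^ 2)) /
          (Real.tan ((p.1 - s) / 2) ^ 2 + Real.tanh ((p.2 - f s) / 2) ^ 2)) :
    ContDiffOn ℝ 1 v1 {p : ℝ × ℝ | p.2 ≠ f p.1} ∧
    ContDiffOn ℝ 1 v2 {p : ℝ × ℝ | p.2 ≠ f p.1} ∧
    (∀ p : ℝ × ℝ, v1 (p.1 + 2 * π, p.2) = v1 p ∧ v2 (p.1 + 2 * π, p.2) = v2 p) ∧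
    (∀ p ∈ {p : ℝ × ℝ | p.2 ≠ f p.1},
      fderiv ℝ v1 p (1, 0) + fderiv ℝ v2 p (0, 1) = 0 ∧
      fderiv ℝ v2 p (1, 0) - fderiv ℝ v1 p (0, 1) = 0) :=
  velocity_field_div_rot_free_general k Δρ μ f hf hper v1 v2 hv1 hv2
end
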